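/- Let (𝔙, 𝔙⁺, |·|) be a non-degenerate absolutely ordered 𝔉-bimodule. Then for every 𝔳 ∈ 𝔙 and every local unitary 𝔞 ∈ 𝔉 with o(𝔳) ≤ o(𝔞), one has |𝔞*𝔳𝔞| = 𝔞*|𝔳|𝔞. -/

import Mathlib

noncomputable section

open scoped Matrix.Norms.L2Operator

/-! ### The *-algebra 𝔉 of ∞×∞ complex matrices with finitely many nonzero entries -/

/-- `∞ × ∞` complex matrices (indexed by `ℕ × ℕ`). -/
abbrev FMat := ℕ → ℕ → ℂ

/-- The matrix has (at most) finitely many nonzero entries: it is supported in some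
`n × n` top-left block. -/
def IsFin (a : FMat) : Prop := ∃ n, ∀ i j, (n ≤ i ∨ n ≤ j) → a i j = 0

/-- Matrix multiplication in `𝔉` (the `tsum` is a finite sum for finitely supported
matrices). -/
def fmul (a b : FMat) : FMat := fun i k => ∑' j, a i j * b j k

/-- The involution (conjugate transpose) on `𝔉`. -/
def fstar (a : FMat) : FMat := fun i j => starRingEnd ℂ (a j i)

/-- The matrix unit `𝔢_{i,j}`. -/
def eUnit (i j : ℕ) : FMat := fun k l => if k = i ∧ l = j then 1 else 0

/-- `𝔍ₙ = Σ_{i<n} 𝔢_{i,i}`, the partial identities. -/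
def JMat (n : ℕ) : FMat := fun k l => if k = l ∧ k < n then 1 else 0

/-- `𝔎ₙ = Σ_{i<n} 𝔢_{i,n+i}`, used for `2×2`-block constructions. -/
def KMat (n : ℕ) : FMat := fun k l => if l = k + n ∧ k < n then 1 else 0

/-- The diagonal idempotent `Σ_{i ∈ s} 𝔢_{i,i}` associated to a finite set `s ⊂ ℕ`. -/
def finsetDiag (s : Finset ℕ) : FMat := fun k l => if k = l ∧ k ∈ s then 1 else 0

/-- The operator norm on `𝔉`: the supremum of the (C*-algebra) operator norms of the
finite top-left blocks (for a finitely supported matrix the blocks stabilize). -/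
def fnorm (a : FMat) : ℝ :=
  ⨆ n : ℕ, ‖(Matrix.of fun i j : Fin n => a i j : Matrix (Fin n) (Fin n) ℂ)‖

/-- The order `o(𝔞)` of a finitely supported matrix: the least `n` such that `𝔞` is
supported in the top-left `n × n` block. -/
def matOrd (a : FMat) : ℕ := sInf {n | ∀ i j, (n ≤ i ∨ n ≤ j) → a i j = 0}

/-- A local unitary in `𝔉`: `𝔞*𝔞 = 𝔍_{o(𝔞)} = 𝔞𝔞*`. -/
def IsLocalUnitary (a : FMat) : Prop :=
  IsFin a ∧ fmul (fstar a) a = JMat (matOrd a) ∧ fmul a (fstar a) = JMat (matOrd a)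

/-! ### Non-degenerate *-𝔉-bimodules -/

/-- A non-degenerate `*`-`𝔉`-bimodule structure on a complex vector space `V`:
left and right actions of (finitely supported) infinite matrices together with an
involution, compatible with each other and with the complex scalars, such that every
element is `𝔍ₙ·v·𝔍ₙ` for some `n`. -/
structure FBimod (V : Type*) [AddCommGroup V] [Module ℂ V] where
  lsmul : FMat → V → V
  rsmul : V → FMat → V
  star : V → V
  lsmul_add : ∀ a u v, lsmul a (u + v) = lsmul a u + lsmul a v
  rsmul_add : ∀ u v b, rsmul (u + v) b = rsmul u b + rsmul v b
  add_lsmul : ∀ a b v, IsFin a → IsFin b → lsmul (a + b) v = lsmul a v + lsmul b v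
  rsmul_add' : ∀ v a b, IsFin a → IsFin b → rsmul v (a + b) = rsmul v a + rsmul v b
  smul_lsmul : ∀ (c : ℂ) a v, IsFin a → lsmul (c • a) v = c • lsmul a v
  smul_rsmul : ∀ (c : ℂ) v a, IsFin a → rsmul v (c • a) = c • rsmul v a
  mul_lsmul : ∀ a b v, IsFin a → IsFin b → lsmul (fmul a b) v = lsmul a (lsmul b v)
  rsmul_mul : ∀ v a b, IsFin a → IsFin b → rsmul v (fmul a b) = rsmul (rsmul v a) b
  lsmul_rsmul : ∀ a v b, IsFin a → IsFin b → rsmul (lsmul a v) b = lsmul a (rsmul v b)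
  star_add : ∀ u v, star (u + v) = star u + star v
  star_star : ∀ v, star (star v) = v
  star_lsmul : ∀ a v, IsFin a → star (lsmul a v) = rsmul (star v) (fstar a)
  star_rsmul : ∀ v a, IsFin a → star (rsmul v a) = lsmul (fstar a) (star v)
  smul_compat : ∀ (c : ℂ) (n : ℕ) v, lsmul (JMat n) (rsmul v (JMat n)) = v →
    lsmul (c • JMat n) v = c • v
  nondeg : ∀ v, ∃ n, lsmul (JMat n) (rsmul v (JMat n)) = v

namespace FBimod

variable {V : Type*} [AddCommGroup V] [Module ℂ V] (M : FBimod V)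

/-- `𝔍ₙ 𝔳 𝔍ₙ`. -/
def cut (n : ℕ) (v : V) : V := M.lsmul (JMat n) (M.rsmul v (JMat n))

/-- The order `o(𝔳)`: the smallest `n` with `𝔍ₙ 𝔳 𝔍ₙ = 𝔳`. -/
def ord (v : V) : ℕ := sInf {n | M.cut n v = v}

/-- `𝔞* 𝔳 𝔞`. -/
def conj (a : FMat) (v : V) : V := M.lsmul (fstar a) (M.rsmul v a)

/-- `C` is a bimodule cone: consists of self-adjoint elements, is closed under
addition and under `𝔳 ↦ 𝔞*𝔳𝔞` for `𝔞 ∈ 𝔉`. -/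
def IsCone (C : Set V) : Prop :=
  (∀ v ∈ C, M.star v = v) ∧ (∀ u ∈ C, ∀ v ∈ C, u + v ∈ C) ∧
    (∀ v ∈ C, ∀ a : FMat, IsFin a → M.conj a v ∈ C)

/-- The cone `C` is proper: `C ∩ (−C) = {0}`. -/
def ConeProper (C : Set V) : Prop := ∀ v ∈ C, -v ∈ C → v = 0

/-- The cone `C` is Archimedean. -/
def ConeArch (C : Set V) : Prop :=
  ∀ u ∈ C, ∀ v : V, M.star v = v → (∀ k : ℝ, 0 < k → (k : ℂ) • u + v ∈ C) → v ∈ C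

/-- The cone `C` is generating. -/
def ConeGen (C : Set V) : Prop :=
  ∀ v : V, ∃ v₀ ∈ C, ∃ v₁ ∈ C, ∃ v₂ ∈ C, ∃ v₃ ∈ C,
    v = v₀ + Complex.I • v₁ - v₂ - Complex.I • v₃

/-- `(𝔳₁, 𝔳₂)ₙ⁺ = 𝔳₁ + 𝔎ₙ* 𝔳₂ 𝔎ₙ` (the diagonal `2×2`-block `diag(𝔳₁,𝔳₂)`). -/
def pairPlus (n : ℕ) (v₁ v₂ : V) : V :=
  v₁ + M.lsmul (fstar (KMat n)) (M.rsmul v₂ (KMat n))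

/-- `saₙ(𝔳) = 𝔍ₙ 𝔳 𝔎ₙ + 𝔎ₙ* 𝔳* 𝔍ₙ` (the off-diagonal `2×2`-block of `𝔳`). -/
def san (n : ℕ) (v : V) : V :=
  M.lsmul (JMat n) (M.rsmul v (KMat n)) +
    M.lsmul (fstar (KMat n)) (M.rsmul (M.star v) (JMat n))

/-- `𝔲` and `𝔳` are `𝔉`-independent: compressed onto disjoint diagonal blocks. -/
def FIndep (u v : V) : Prop :=
  ∃ I J : Finset ℕ, Disjoint I J ∧
    M.lsmul (finsetDiag I) (M.rsmul u (finsetDiag I)) = u ∧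
    M.lsmul (finsetDiag J) (M.rsmul v (finsetDiag J)) = v

/-- `(𝔙, C, abs)` is a non-degenerate absolutely ordered `𝔉`-bimodule
(Definition 18 of the paper). -/
structure IsAbsOrd (C : Set V) (abs : V → V) : Prop where
  cone : M.IsCone C
  abs_mem : ∀ v, abs v ∈ C
  ord_abs_le : ∀ v, M.ord (abs v) ≤ M.ord v
  abs_of_mem : ∀ v ∈ C, abs v = v
  pos_part : ∀ v, M.pairPlus (M.ord v) (abs (M.star v)) (abs v) + M.san (M.ord v) v ∈ C
  abs_smul_le : ∀ (a b : FMat), IsFin a → IsFin b → ∀ v,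
    (fnorm a : ℂ) • abs (M.rsmul (abs v) b) - abs (M.lsmul a (M.rsmul v b)) ∈ C
  indep_add : ∀ u v, M.FIndep u v → abs (u + v) = abs u + abs v
  absorb : ∀ u ∈ C, ∀ v ∈ C, ∀ w ∈ C, abs (u - v) = u + v → v - w ∈ C →
    abs (u - w) = u + w
  ortho_pm : ∀ u ∈ C, ∀ v ∈ C, ∀ w ∈ C, abs (u - v) = u + v → abs (u - w) = u + w →
    abs (u - abs (v + w)) = u + abs (v + w) ∧ abs (u - abs (v - w)) = u + abs (v - w)

/-- `eⁿ = Σ_{i<n} 𝔢_{i,0} 𝔢 𝔢_{0,i}` for an element `𝔢` of order `1`. -/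
def epow (e : V) (n : ℕ) : V :=
  ∑ i ∈ Finset.range n, M.lsmul (eUnit i 0) (M.rsmul e (eUnit 0 i))

/-- `𝔢` is a local order unit for `(𝔙, C)`. -/
def IsLocalOrderUnit (C : Set V) (e : V) : Prop :=
  e ∈ C ∧ M.cut 1 e = e ∧ ∀ v : V, M.cut 1 v = v → ∃ k : ℝ, 0 < k ∧
    M.pairPlus 1 ((k : ℂ) • e) ((k : ℂ) • e) + M.san 1 v ∈ C

/-- `(𝔙, C, 𝔢)` is a local `𝔉`-order unit bimodule. -/
def IsLocalUnitBimod (C : Set V) (e : V) : Prop :=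
  M.IsCone C ∧ ConeProper C ∧ M.ConeArch C ∧ M.IsLocalOrderUnit C e

/-- The norm associated to a local order unit:
`‖𝔳‖ = inf { k > 0 : (k𝔢^{o(𝔳)}, k𝔢^{o(𝔳)})⁺_{o(𝔳)} + sa_{o(𝔳)}(𝔳) ∈ C }`. -/
def lnorm (C : Set V) (e : V) (v : V) : ℝ :=
  sInf {k : ℝ | 0 < k ∧
    M.pairPlus (M.ord v) ((k : ℂ) • M.epow e (M.ord v)) ((k : ℂ) • M.epow e (M.ord v)) +
      M.san (M.ord v) v ∈ C}

/-- `𝔲 ⊥_∞ 𝔳` with respect to the local-order-unit norm. -/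
def PerpInf (C : Set V) (e : V) (u v : V) : Prop :=
  ∀ k₁ k₂ : ℝ, M.lnorm C e ((k₁ : ℂ) • u + (k₂ : ℂ) • v) =
    max (M.lnorm C e ((k₁ : ℂ) • u)) (M.lnorm C e ((k₂ : ℂ) • v))

end FBimod
/-! ### Matrices over a complex *-vector space -/

section MatrixLevel

variable {V : Type*} [AddCommGroup V] [Module ℂ V] [StarAddMonoid V] [StarModule ℂ V]

/-- Conjugate transpose of a rectangular matrix over a `*`-vector space. -/
def mstar {m n : ℕ} (v : Matrix (Fin m) (Fin n) V) : Matrix (Fin n) (Fin m) V :=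
  fun i j => star (v j i)

/-- Left action of a scalar matrix: `(a v)_{ij} = Σ_k a_{ik} v_{kj}`. -/
def aSmul {r m n : ℕ} (a : Matrix (Fin r) (Fin m) ℂ) (v : Matrix (Fin m) (Fin n) V) :
    Matrix (Fin r) (Fin n) V :=
  fun i j => ∑ k, a i k • v k j

/-- Right action of a scalar matrix: `(v b)_{ij} = Σ_k b_{kj} • v_{ik}`. -/
def smulB {m n s : ℕ} (v : Matrix (Fin m) (Fin n) V) (b : Matrix (Fin n) (Fin s) ℂ) :
    Matrix (Fin m) (Fin s) V :=
  fun i j => ∑ k, b k j • v i k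

/-- Direct sum (block diagonal) of rectangular matrices over `V`. -/
def dsum {m n r s : ℕ} (v : Matrix (Fin m) (Fin n) V) (w : Matrix (Fin r) (Fin s) V) :
    Matrix (Fin (m + r)) (Fin (n + s)) V :=
  fun i j =>
    if hi : (i : ℕ) < m then
      (if hj : (j : ℕ) < n then v ⟨i, hi⟩ ⟨j, hj⟩ else 0)
    else
      (if hj : (j : ℕ) < n then 0
       else w ⟨(i : ℕ) - m, by have := i.isLt; omega⟩ ⟨(j : ℕ) - n, by have := j.isLt; omega⟩)

end MatrixLevel

/-- The L2-operator norm of a rectangular complex scalar matrix. -/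
def cnorm {r m : ℕ} (a : Matrix (Fin r) (Fin m) ℂ) : ℝ := ‖a‖

/-- Embedding of a finite rectangular complex matrix into `𝔉`. -/
def embC {r m : ℕ} (a : Matrix (Fin r) (Fin m) ℂ) : FMat :=
  fun i j => if hi : i < r then (if hj : j < m then a ⟨i, hi⟩ ⟨j, hj⟩ else 0) else 0

/-- `e ⊕ ⋯ ⊕ e`: the diagonal matrix with constant diagonal `e`. -/
def diagE {V : Type*} [AddCommGroup V] (e : V) (n : ℕ) : Matrix (Fin n) (Fin n) V :=
  Matrix.of fun i j => if i = j then e else 0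

/-! ### Absolutely matrix ordered spaces and absolute matrix order unit spaces -/

/-- An absolutely matrix ordered space structure on a complex `*`-vector space `V`:
matrix cones `Mₙ(V)⁺` and absolute values `|·|_{m,n} : M_{m,n}(V) → Mₙ(V)⁺`
(Definition 4.1 of Karn-Kumar). -/
structure AMOS (V : Type*) [AddCommGroup V] [Module ℂ V] [StarAddMonoid V]
    [StarModule ℂ V] where
  pos : ∀ n : ℕ, Set (Matrix (Fin n) (Fin n) V)
  abs : ∀ m n : ℕ, Matrix (Fin m) (Fin n) V → Matrix (Fin n) (Fin n) V
  pos_star : ∀ n, ∀ v ∈ pos n, mstar v = v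
  pos_add : ∀ n, ∀ u ∈ pos n, ∀ v ∈ pos n, u + v ∈ pos n
  pos_conj : ∀ m n (a : Matrix (Fin n) (Fin m) ℂ), ∀ v ∈ pos n,
    aSmul a.conjTranspose (smulB v a) ∈ pos m
  abs_mem : ∀ m n v, abs m n v ∈ pos n
  abs_of_pos : ∀ n, ∀ v ∈ pos n, abs n n v = v
  abs_add_self : ∀ n (v : Matrix (Fin n) (Fin n) V), mstar v = v →
    abs n n v + v ∈ pos n ∧ abs n n v - v ∈ pos n
  abs_real_smul : ∀ n (k : ℝ) (v : Matrix (Fin n) (Fin n) V), mstar v = v →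
    abs n n ((k : ℂ) • v) = ((|k| : ℝ) : ℂ) • abs n n v
  absorb : ∀ n, ∀ u ∈ pos n, ∀ v ∈ pos n, ∀ w ∈ pos n,
    abs n n (u - v) = u + v → v - w ∈ pos n → abs n n (u - w) = u + w
  ortho_pm : ∀ n, ∀ u ∈ pos n, ∀ v ∈ pos n, ∀ w ∈ pos n,
    abs n n (u - v) = u + v → abs n n (u - w) = u + w →
    abs n n (u - abs n n (v + w)) = u + abs n n (v + w) ∧
      abs n n (u - abs n n (v - w)) = u + abs n n (v - w)
  abs_smul_le : ∀ (r m n s : ℕ) (α : Matrix (Fin r) (Fin m) ℂ)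
    (v : Matrix (Fin m) (Fin n) V) (β : Matrix (Fin n) (Fin s) ℂ),
    (cnorm α : ℂ) • abs n s (smulB (abs m n v) β) - abs r s (aSmul α (smulB v β)) ∈ pos s
  abs_dsum : ∀ (m n r s : ℕ) (v : Matrix (Fin m) (Fin n) V) (w : Matrix (Fin r) (Fin s) V),
    abs (m + r) (n + s) (dsum v w) = dsum (abs m n v) (abs r s w)

/-- A matrix order unit structure on top of an absolutely matrix ordered space:
an order unit `e` with `V⁺` proper and each `Mₙ(V)⁺` Archimedean. -/
structure AMOUS (V : Type*) [AddCommGroup V] [Module ℂ V] [StarAddMonoid V]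
    [StarModule ℂ V] extends AMOS V where
  e : V
  e_pos : diagE e 1 ∈ pos 1
  proper : ∀ v ∈ pos 1, -v ∈ pos 1 → v = 0
  arch : ∀ n (v : Matrix (Fin n) (Fin n) V), mstar v = v →
    (∀ k : ℝ, 0 < k → (k : ℂ) • diagE e n + v ∈ pos n) →
    v ∈ pos n
  unit : ∀ n (v : Matrix (Fin n) (Fin n) V), mstar v = v →
    ∃ k : ℝ, 0 < k ∧ (k : ℂ) • diagE e n - v ∈ pos n ∧
      (k : ℂ) • diagE e n + v ∈ pos n

namespace AMOUS

variable {V : Type*} [AddCommGroup V] [Module ℂ V] [StarAddMonoid V] [StarModule ℂ V]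
variable (A : AMOUS V)

/-- `eⁿ = e ⊕ ⋯ ⊕ e ∈ Mₙ(V)`. -/
def eN (n : ℕ) : Matrix (Fin n) (Fin n) V := diagE A.e n

/-- The `2n × 2n` matrix `[[a, b], [c, d]]` of `n × n` blocks. -/
def block2 {n : ℕ} (a b c d : Matrix (Fin n) (Fin n) V) :
    Matrix (Fin (n + n)) (Fin (n + n)) V :=
  fun i j =>
    if hi : (i : ℕ) < n then
      (if hj : (j : ℕ) < n then a ⟨i, hi⟩ ⟨j, hj⟩
       else b ⟨i, hi⟩ ⟨(j : ℕ) - n, by have := j.isLt; omega⟩)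
    else
      (if hj : (j : ℕ) < n then c ⟨(i : ℕ) - n, by have := i.isLt; omega⟩ ⟨j, hj⟩
       else d ⟨(i : ℕ) - n, by have := i.isLt; omega⟩ ⟨(j : ℕ) - n, by have := j.isLt; omega⟩)

end AMOUS
namespace AMOUS

variable {V : Type*} [AddCommGroup V] [Module ℂ V] [StarAddMonoid V] [StarModule ℂ V]
variable (A : AMOUS V)

/-- The matrix norms of a matrix order unit space:
`‖v‖ₙ = inf { k > 0 : [[k eⁿ, v], [v*, k eⁿ]] ∈ M₂ₙ(V)⁺ }`. -/
def mnorm (n : ℕ) (v : Matrix (Fin n) (Fin n) V) : ℝ :=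
  sInf {k : ℝ | 0 < k ∧
    block2 ((k : ℂ) • A.eN n) v (mstar v) ((k : ℂ) • A.eN n) ∈ A.pos (n + n)}

/-- Orthogonality `u ⊥ v` (for positive elements): `|u − v| = u + v`. -/
def Perp {n : ℕ} (u v : Matrix (Fin n) (Fin n) V) : Prop :=
  A.abs n n (u - v) = u + v

/-- `u ⊥_∞ v`: `‖k₁ u + k₂ v‖ = max {‖k₁ u‖, ‖k₂ v‖}` for all real `k₁, k₂`. -/
def PerpInfM {n : ℕ} (u v : Matrix (Fin n) (Fin n) V) : Prop :=
  ∀ k₁ k₂ : ℝ, A.mnorm n ((k₁ : ℂ) • u + (k₂ : ℂ) • v) =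
    max (A.mnorm n ((k₁ : ℂ) • u)) (A.mnorm n ((k₂ : ℂ) • v))

/-- `u ⊥_∞^a v`: absolute `∞`-orthogonality. -/
def PerpInfA {n : ℕ} (u v : Matrix (Fin n) (Fin n) V) : Prop :=
  ∀ u₁ ∈ A.pos n, ∀ v₁ ∈ A.pos n, u - u₁ ∈ A.pos n → v - v₁ ∈ A.pos n → A.PerpInfM u₁ v₁

/-- `(V, {Mₙ(V)⁺}, {|·|}, e)` is an absolute matrix order unit space:
`⊥ = ⊥_∞^a` on each `Mₙ(V)⁺`. -/
def IsAbsolute : Prop :=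
  ∀ n, ∀ u ∈ A.pos n, ∀ v ∈ A.pos n, (A.Perp u v ↔ A.PerpInfA u v)

/-- `p` is an order projection in `Mₙ(V)`: `p* = p` and `|2p − eⁿ| = eⁿ`. -/
def IsOP (n : ℕ) (p : Matrix (Fin n) (Fin n) V) : Prop :=
  mstar p = p ∧ A.abs n n ((2 : ℂ) • p - A.eN n) = A.eN n

/-- `v ∈ M_{m,n}(V)` is a partial isometry: `|v|` and `|v*|` are order projections. -/
def IsPI {m n : ℕ} (v : Matrix (Fin m) (Fin n) V) : Prop :=
  A.IsOP n (A.abs m n v) ∧ A.IsOP m (A.abs n m (mstar v))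

end AMOUS

/-- An element of `M_∞(V)`: a matrix at some level `n`. -/
def OPE (V : Type*) : Type _ := Σ n : ℕ, Matrix (Fin n) (Fin n) V

namespace OPE

variable {V : Type*} [AddCommGroup V] [Module ℂ V] [StarAddMonoid V] [StarModule ℂ V]

/-- Direct sum in `M_∞(V)`. -/
def d (p q : OPE V) : OPE V := ⟨p.1 + q.1, dsum p.2 q.2⟩

/-- The zero order projection (at level 1). -/
def zero (V : Type*) [AddCommGroup V] : OPE V := ⟨1, 0⟩

end OPE

namespace AMOUS

variable {V : Type*} [AddCommGroup V] [Module ℂ V] [StarAddMonoid V] [StarModule ℂ V]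
variable (A : AMOUS V)

/-- Membership in `𝒪𝒫_∞(V)`. -/
def IsOPE (p : OPE V) : Prop := A.IsOP p.1 p.2

/-- `eⁿ` as an element of `𝒪𝒫_∞(V)`. -/
def eOPE (n : ℕ) : OPE V := ⟨n, A.eN n⟩

/-- Partial isometric equivalence `p ∼ q` of order projections: there is a partial
isometry `v` with `p = |v*|` and `q = |v|`. -/
def Sim (p q : OPE V) : Prop :=
  ∃ v : Matrix (Fin p.1) (Fin q.1) V,
    A.IsPI v ∧ p.2 = A.abs q.1 p.1 (mstar v) ∧ q.2 = A.abs p.1 q.1 v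

/-- Condition (T). -/
def CondT : Prop :=
  ∀ (m n l : ℕ) (u : Matrix (Fin m) (Fin n) V) (v : Matrix (Fin l) (Fin n) V),
    A.IsPI u → A.IsPI v → A.abs m n u = A.abs l n v →
    ∃ w : Matrix (Fin m) (Fin l) V, A.IsPI w ∧
      A.abs l m (mstar w) = A.abs n m (mstar u) ∧ A.abs m l w = A.abs n l (mstar v)

/-- Stabilized equivalence `p ≈ q`: `p ⊕ r ∼ q ⊕ r` for some order projection `r`. -/
def ASim (p q : OPE V) : Prop := ∃ r : OPE V, A.IsOPE r ∧ A.Sim (p.d r) (q.d r)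

/-- A pair of order projections, representing an element `[(p,q)]` of `K₀(V)`. -/
def IsOPPair (x : OPE V × OPE V) : Prop := A.IsOPE x.1 ∧ A.IsOPE x.2

/-- The relation `(p₁,q₁) ≡ (p₂,q₂) ↔ p₁ ⊕ q₂ ≈ p₂ ⊕ q₁` defining `K₀(V)`. -/
def Krel (x y : OPE V × OPE V) : Prop := A.ASim (x.1.d y.2) (y.1.d x.2)

/-- Addition of representatives of `K₀(V)` classes. -/
def kadd (x y : OPE V × OPE V) : OPE V × OPE V := (x.1.d y.1, x.2.d y.2)

/-- The representative of the zero class of `K₀(V)`. -/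
def kzero : OPE V × OPE V := (OPE.zero V, OPE.zero V)

/-- Representative-level membership in the cone `K₀(V)⁺ = {[(p,0)] : p ∈ 𝒪𝒫_∞(V)}`. -/
def KPos (x : OPE V × OPE V) : Prop :=
  ∃ p : OPE V, A.IsOPE p ∧ A.Krel x (p, OPE.zero V)

/-- Representative-level order `[x] ≤ [y]` in `K₀(V)`: `[y] − [x] ∈ K₀(V)⁺`. -/
def Kle (x y : OPE V × OPE V) : Prop :=
  ∃ r : OPE V, A.IsOPE r ∧ A.Krel (kadd x (r, OPE.zero V)) y

/-- The order projection `p ∈ Mₙ(V)` is finite: `q ∼ p` and `q ≥ p` imply `q = p`. -/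
def FiniteOP (n : ℕ) (p : Matrix (Fin n) (Fin n) V) : Prop :=
  ∀ q : Matrix (Fin n) (Fin n) V, A.IsOP n q → A.Sim ⟨n, q⟩ ⟨n, p⟩ →
    q - p ∈ A.pos n → q = p

end AMOUS

/-! ### Maps between absolute matrix order unit spaces -/

section Maps

variable {V W : Type*} [AddCommGroup V] [Module ℂ V] [StarAddMonoid V] [StarModule ℂ V]
  [AddCommGroup W] [Module ℂ W] [StarAddMonoid W] [StarModule ℂ W]

/-- The amplification `φₙ` (entrywise application) of a map. -/
def mmap (φ : V →ₗ[ℂ] W) {m n : ℕ} (v : Matrix (Fin m) (Fin n) V) :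
    Matrix (Fin m) (Fin n) W :=
  fun i j => φ (v i j)

/-- `φ` is completely `|·|`-preserving: every amplification `φₙ` is `|·|`-preserving. -/
def CAbsPres (A : AMOUS V) (B : AMOUS W) (φ : V →ₗ[ℂ] W) : Prop :=
  ∀ (n : ℕ) (v : Matrix (Fin n) (Fin n) V), B.abs n n (mmap φ v) = mmap φ (A.abs n n v)

/-- `φ` and `ψ` are completely orthogonal: `φₙ(u) ⊥ ψₙ(v)` for all positive `u, v`. -/
def COrth (A : AMOUS V) (B : AMOUS W) (φ ψ : V →ₗ[ℂ] W) : Prop :=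
  ∀ (n : ℕ) (u v : Matrix (Fin n) (Fin n) V), u ∈ A.pos n → v ∈ A.pos n →
    B.Perp (mmap φ u) (mmap ψ v)

/-- The image of an element of `M_∞(V)` under (the amplifications of) `φ`. -/
def mmapOPE (φ : V →ₗ[ℂ] W) (p : OPE V) : OPE W := ⟨p.1, mmap φ p.2⟩

/-- `F` represents a group homomorphism `K₀(V) → K₀(W)` making the `K₀` diagram of `φ`
commute: it maps `K₀`-representatives to `K₀`-representatives, respects the defining
relation `≡`, is additive, and satisfies `F([(p, 0)]) = [(φ(p), 0)]`. -/
def K0HomProp (A : AMOUS V) (B : AMOUS W) (φ : V →ₗ[ℂ] W)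
    (F : OPE V × OPE V → OPE W × OPE W) : Prop :=
  (∀ x, A.IsOPPair x → B.IsOPPair (F x)) ∧
  (∀ x y, A.IsOPPair x → A.IsOPPair y → A.Krel x y → B.Krel (F x) (F y)) ∧
  (∀ x y, A.IsOPPair x → A.IsOPPair y → B.Krel (F (AMOUS.kadd x y)) (AMOUS.kadd (F x) (F y))) ∧
  (∀ p : OPE V, A.IsOPE p → B.Krel (F (p, OPE.zero V)) (mmapOPE φ p, OPE.zero W))

/-- The completely bounded norm of `φ` with respect to the order unit matrix norms. -/
def cbNorm (A : AMOUS V) (B : AMOUS W) (φ : V →ₗ[ℂ] W) : ℝ :=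
  ⨆ n : ℕ, sInf {c : ℝ | 0 ≤ c ∧
    ∀ v : Matrix (Fin n) (Fin n) V, B.mnorm n (mmap φ v) ≤ c * A.mnorm n v}

end Maps


/-!
For a local unitary `𝔟` of order `n`, the axiom `|𝔞𝔳𝔟| ≤ ‖𝔞‖ ||𝔳|𝔟|` gives two contractions:
with `𝔞 = 𝔟*` it bounds `|𝔟*𝔳𝔟| ≤ ||𝔳|𝔟|`, and applied to the positive element `𝔟*|𝔳|𝔟`
(with `𝔍ₙ` on the right) it bounds `||𝔳|𝔟| ≤ 𝔟*|𝔳|𝔟`, because `𝔟𝔟*|𝔳|𝔟 = |𝔳|𝔟`.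
Here `‖𝔟‖, ‖𝔟*‖ ≤ 1`, since each finite block of `𝔟` is a compression of a block whose Gram
matrix is the projection `𝔍ₙ`. So `|𝔟*𝔳𝔟| ≤ 𝔟*|𝔳|𝔟`. Using this for `𝔟 = 𝔞*` and the element
`𝔞*𝔳𝔞`, then conjugating by `𝔞`, gives the reverse inequality; the cone is proper (by the
absorption axiom applied to `0`), so the two sides agree.
-/

def IsSupportedIn (a : FMat) (n : ℕ) : Prop := ∀ i j, (n ≤ i ∨ n ≤ j) → a i j = 0

section FiniteMatrices

variable {a : FMat} {m n : ℕ}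

lemma IsSupportedIn.isFin (h : IsSupportedIn a n) : IsFin a := ⟨n, h⟩

lemma IsSupportedIn.mono (h : IsSupportedIn a m) (hmn : m ≤ n) : IsSupportedIn a n :=
  fun i j hij => h i j (by omega)

lemma IsFin.isSupportedIn_matOrd (h : IsFin a) : IsSupportedIn a (matOrd a) :=
  Nat.sInf_mem (s := {n | IsSupportedIn a n}) h

lemma isSupportedIn_JMat (n : ℕ) : IsSupportedIn (JMat n) n := by
  intro i j hij
  simp only [JMat, ite_eq_right_iff]
  omega

lemma isFin_JMat (n : ℕ) : IsFin (JMat n) := (isSupportedIn_JMat n).isFin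

lemma IsSupportedIn.smul (h : IsSupportedIn a n) (c : ℂ) : IsSupportedIn (c • a) n :=
  fun i j hij => by simp [h i j hij]

lemma fstar_fstar (a : FMat) : fstar (fstar a) = a := by
  funext i j; simp [fstar]

lemma fstar_smul (c : ℂ) (a : FMat) : fstar (c • a) = starRingEnd ℂ c • fstar a := by
  funext i j; simp [fstar]

lemma fstar_JMat (n : ℕ) : fstar (JMat n) = JMat n := by
  funext i j
  by_cases hij : i = j
  · subst hij; simp [fstar, JMat]
  · simp [fstar, JMat, hij, Ne.symm hij]

lemma isSupportedIn_fstar_iff : IsSupportedIn (fstar a) n ↔ IsSupportedIn a n := by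
  simp only [IsSupportedIn, fstar, map_eq_zero]
  exact ⟨fun h i j hij => h j i hij.symm, fun h i j hij => h j i hij.symm⟩

lemma IsSupportedIn.fstar (h : IsSupportedIn a n) : IsSupportedIn (fstar a) n :=
  isSupportedIn_fstar_iff.mpr h

lemma matOrd_fstar (a : FMat) : matOrd (fstar a) = matOrd a :=
  congrArg sInf (Set.ext fun _ => isSupportedIn_fstar_iff)

lemma isLocalUnitary_fstar (h : IsLocalUnitary a) : IsLocalUnitary (fstar a) := by
  obtain ⟨⟨n, hn⟩, h₁, h₂⟩ := h
  rw [IsLocalUnitary, fstar_fstar, matOrd_fstar]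
  exact ⟨(isSupportedIn_fstar_iff.mpr hn).isFin, h₂, h₁⟩

lemma fmul_JMat_of_isSupportedIn (h : IsSupportedIn a n) : fmul a (JMat n) = a := by
  funext i k
  rw [fmul, tsum_eq_single k fun j hj => by simp [JMat, hj]]
  by_cases hk : k < n
  · simp [JMat, hk]
  · simp [JMat, hk, h i k (Or.inr (by omega))]

lemma JMat_fmul_of_isSupportedIn (h : IsSupportedIn a n) : fmul (JMat n) a = a := by
  funext i k
  rw [fmul, tsum_eq_single i fun j hj => by simp [JMat, Ne.symm hj]]
  by_cases hi : i < n
  · simp [JMat, hi]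
  · simp [JMat, hi, h i k (Or.inl (by omega))]

end FiniteMatrices

section OperatorNorm

open Matrix

lemma Matrix.l2_opNorm_le_one_of_isStarProjection {m n : Type*} [Fintype m] [Fintype n]
    [DecidableEq n] {A : Matrix m n ℂ} (h : IsStarProjection (Aᴴ * A)) : ‖A‖ ≤ 1 := by
  have hA := l2_opNorm_conjTranspose_mul_self A ▸ h.norm_le
  nlinarith [norm_nonneg A]

lemma Matrix.l2_opNorm_submatrix_le {m n p q : Type*} [Fintype m] [Fintype n] [Fintype p]
    [Fintype q] [DecidableEq m] [DecidableEq n] [DecidableEq p] [DecidableEq q]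
    (A : Matrix m n ℂ) {f : p → m} {g : q → n} (hf : f.Injective) (hg : g.Injective) :
    ‖A.submatrix f g‖ ≤ ‖A‖ := by
  have hrow : ‖(1 : Matrix m m ℂ).submatrix f id‖ ≤ 1 := by
    rw [← l2_opNorm_conjTranspose]
    refine l2_opNorm_le_one_of_isStarProjection ?_
    rw [conjTranspose_conjTranspose, conjTranspose_submatrix, conjTranspose_one,
      ← submatrix_mul _ _ _ _ _ Function.bijective_id, mul_one, submatrix_one f hf]
    exact .one _
  have hcol : ‖(1 : Matrix n n ℂ).submatrix id g‖ ≤ 1 := by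
    refine l2_opNorm_le_one_of_isStarProjection ?_
    rw [conjTranspose_submatrix, conjTranspose_one,
      ← submatrix_mul _ _ _ _ _ Function.bijective_id, mul_one, submatrix_one g hg]
    exact .one _
  have hfac : A.submatrix f g =
      (1 : Matrix m m ℂ).submatrix f id * A * (1 : Matrix n n ℂ).submatrix id g := by
    conv_lhs => rw [← Matrix.one_mul A, ← Matrix.mul_one (1 * A)]
    rw [submatrix_mul _ _ f id g Function.bijective_id,
      submatrix_mul _ _ f id id Function.bijective_id, submatrix_id_id]
  calc ‖A.submatrix f g‖
      ≤ ‖(1 : Matrix m m ℂ).submatrix f id‖ * ‖A‖ * ‖(1 : Matrix n n ℂ).submatrix id g‖ := by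
        rw [hfac]
        exact (l2_opNorm_mul _ _).trans
          (mul_le_mul_of_nonneg_right (l2_opNorm_mul _ _) (norm_nonneg _))
    _ ≤ 1 * ‖A‖ * 1 := by gcongr
    _ = ‖A‖ := by ring

def block (N : ℕ) (a : FMat) : Matrix (Fin N) (Fin N) ℂ := Matrix.of fun i j => a i j

variable {a b : FMat} {n N : ℕ}

lemma block_fstar : block N (fstar a) = (block N a)ᴴ := by
  ext i j; simp [block, fstar]

lemma block_fmul (h : IsSupportedIn a N) : block N (fmul a b) = block N a * block N b := by
  ext i k
  simp only [block, fmul, of_apply, mul_apply]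
  rw [tsum_eq_sum (s := Finset.range N) fun j hj => by
      simp [h i j (Or.inr (by simpa using hj))],
    ← Fin.sum_univ_eq_sum_range (fun j => a i j * b j k)]

lemma isStarProjection_block_JMat (h : n ≤ N) : IsStarProjection (block N (JMat n)) where
  isIdempotentElem := by
    rw [IsIdempotentElem, ← block_fmul ((isSupportedIn_JMat n).mono h),
      JMat_fmul_of_isSupportedIn (isSupportedIn_JMat n)]
  isSelfAdjoint := by
    rw [IsSelfAdjoint, star_eq_conjTranspose, ← block_fstar, fstar_JMat]

lemma IsLocalUnitary.l2_opNorm_block_le_one (ha : IsLocalUnitary a) (m : ℕ) :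
    ‖block m a‖ ≤ 1 := by
  set N := max m (matOrd a)
  have hfs : IsSupportedIn (fstar a) N :=
    (ha.1.isSupportedIn_matOrd.mono (le_max_right _ _)).fstar
  have hproj : IsStarProjection ((block N a)ᴴ * block N a) := by
    rw [← block_fstar, ← block_fmul hfs, ha.2.1]
    exact isStarProjection_block_JMat (le_max_right _ _)
  calc ‖block m a‖
      = ‖(block N a).submatrix (Fin.castLE (le_max_left _ _)) (Fin.castLE (le_max_left _ _))‖ :=
        rfl
    _ ≤ ‖block N a‖ := l2_opNorm_submatrix_le _ (Fin.castLE_injective _) (Fin.castLE_injective _)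
    _ ≤ 1 := l2_opNorm_le_one_of_isStarProjection hproj

lemma IsLocalUnitary.fnorm_le_one (ha : IsLocalUnitary a) : fnorm a ≤ 1 :=
  ciSup_le ha.l2_opNorm_block_le_one

end OperatorNorm

namespace FBimod

variable {V : Type*} [AddCommGroup V] [Module ℂ V] (M : FBimod V) {a b : FMat} {n : ℕ}
  {u v : V}

lemma lsmul_zero (a : FMat) : M.lsmul a 0 = 0 :=
  (AddMonoidHom.mk' (M.lsmul a) (M.lsmul_add a)).map_zero

lemma rsmul_zero (b : FMat) : M.rsmul 0 b = 0 :=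
  (AddMonoidHom.mk' (M.rsmul · b) fun u v => M.rsmul_add u v b).map_zero

lemma conj_sub (a : FMat) (u v : V) : M.conj a (u - v) = M.conj a u - M.conj a v := by
  have hl := (AddMonoidHom.mk' (M.lsmul (fstar a)) (M.lsmul_add _)).map_sub
  have hr := (AddMonoidHom.mk' (M.rsmul · a) fun u v => M.rsmul_add u v a).map_sub
  simp only [AddMonoidHom.mk'_apply] at hl hr
  rw [conj, hr, hl, conj, conj]

lemma cut_ord (v : V) : M.cut (M.ord v) v = v :=
  Nat.sInf_mem (M.nondeg v)

lemma ord_le_of_cut (hv : M.cut n v = v) : M.ord v ≤ n :=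
  Nat.sInf_le hv

lemma rsmul_JMat_of_ord_le (hv : M.ord v ≤ n) : M.rsmul v (JMat n) = v := by
  conv_lhs => rw [← M.cut_ord v, cut]
  rw [M.lsmul_rsmul _ _ _ (isFin_JMat _) (isFin_JMat n),
    ← M.rsmul_mul _ _ _ (isFin_JMat _) (isFin_JMat n),
    fmul_JMat_of_isSupportedIn ((isSupportedIn_JMat _).mono hv)]
  exact M.cut_ord v

lemma lsmul_JMat_of_ord_le (hv : M.ord v ≤ n) : M.lsmul (JMat n) v = v := by
  conv_lhs => rw [← M.cut_ord v, cut]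
  rw [← M.mul_lsmul _ _ _ (isFin_JMat n) (isFin_JMat _),
    JMat_fmul_of_isSupportedIn ((isSupportedIn_JMat _).mono hv)]
  exact M.cut_ord v

lemma ord_conj_le (hb : IsSupportedIn b n) : M.ord (M.conj b v) ≤ n := by
  refine M.ord_le_of_cut ?_
  rw [cut, conj, M.lsmul_rsmul _ _ _ hb.fstar.isFin (isFin_JMat n),
    ← M.rsmul_mul _ _ _ hb.isFin (isFin_JMat n), fmul_JMat_of_isSupportedIn hb,
    ← M.mul_lsmul _ _ _ (isFin_JMat n) hb.fstar.isFin, JMat_fmul_of_isSupportedIn hb.fstar]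

lemma lsmul_conj (hb : IsLocalUnitary b) (hv : M.ord v ≤ matOrd b) :
    M.lsmul b (M.conj b v) = M.rsmul v b := by
  rw [conj, ← M.mul_lsmul _ _ _ hb.1 (isLocalUnitary_fstar hb).1, hb.2.2,
    ← M.lsmul_rsmul _ _ _ (isFin_JMat _) hb.1, M.lsmul_JMat_of_ord_le hv]

lemma conj_fstar_conj (ha : IsLocalUnitary a) (hv : M.ord v ≤ matOrd a) :
    M.conj (fstar a) (M.conj a v) = v := by
  rw [conj, fstar_fstar, ← M.lsmul_rsmul _ _ _ ha.1 (isLocalUnitary_fstar ha).1,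
    M.lsmul_conj ha hv, ← M.rsmul_mul _ _ _ ha.1 (isLocalUnitary_fstar ha).1, ha.2.2,
    M.rsmul_JMat_of_ord_le hv]

lemma conj_conj_fstar (ha : IsLocalUnitary a) (hv : M.ord v ≤ matOrd a) :
    M.conj a (M.conj (fstar a) v) = v := by
  simpa only [fstar_fstar] using
    M.conj_fstar_conj (isLocalUnitary_fstar ha) (v := v) (by rwa [matOrd_fstar])

variable {M} {C : Set V}

lemma IsCone.smul_mem (hC : M.IsCone C) (hv : v ∈ C) {c : ℝ} (hc : 0 ≤ c) :
    (c : ℂ) • v ∈ C := by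
  obtain ⟨n, hn⟩ := M.nondeg v
  have hfin : IsFin ((√c : ℂ) • JMat n) := ((isSupportedIn_JMat n).smul _).isFin
  have hconj : M.conj ((√c : ℂ) • JMat n) v = (c : ℂ) • v := by
    rw [conj, fstar_smul, Complex.conj_ofReal, fstar_JMat, ← M.lsmul_rsmul _ _ _ hfin hfin,
      M.smul_rsmul _ _ _ (isFin_JMat n), M.lsmul_rsmul _ _ _ hfin (isFin_JMat n),
      M.rsmul_JMat_of_ord_le (M.ord_le_of_cut hn), M.smul_compat _ n v hn, smul_smul,
      ← Complex.ofReal_mul, Real.mul_self_sqrt hc]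
  exact hconj ▸ hC.2.2 v hv _ hfin

lemma IsCone.sub_mem_of_smul_sub_mem (hC : M.IsCone C) {c : ℝ} (hc : c ≤ 1) (hv : v ∈ C)
    (h : (c : ℂ) • v - u ∈ C) : v - u ∈ C := by
  have hsum := hC.2.1 _ (hC.smul_mem hv (sub_nonneg.mpr hc)) _ h
  rwa [← add_sub_assoc, ← add_smul, ← Complex.ofReal_add, sub_add_cancel, Complex.ofReal_one,
    one_smul] at hsum

namespace IsAbsOrd

variable {abs : V → V}

lemma abs_zero (h : M.IsAbsOrd C abs) : abs 0 = 0 := by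
  have hindep : M.FIndep 0 0 :=
    ⟨∅, ∅, Finset.disjoint_empty_left _, by rw [rsmul_zero, lsmul_zero],
      by rw [rsmul_zero, lsmul_zero]⟩
  simpa only [add_zero, left_eq_add] using h.indep_add 0 0 hindep

lemma eq_zero_of_mem_of_neg_mem (h : M.IsAbsOrd C abs) (hv : v ∈ C) (hnv : -v ∈ C) :
    v = 0 := by
  have h0 : (0 : V) ∈ C := h.abs_zero ▸ h.abs_mem 0
  have := h.absorb 0 h0 0 h0 v hv (by rw [sub_zero, add_zero, h.abs_zero])
    (by rwa [zero_sub])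
  rw [zero_sub, zero_add, h.abs_of_mem _ hnv] at this
  have htwo : (2 : ℂ) • v = 0 := by
    rw [two_smul]
    nth_rewrite 1 [← this]
    exact neg_add_cancel v
  exact (smul_eq_zero.mp htwo).resolve_left two_ne_zero

lemma abs_conj_le (h : M.IsAbsOrd C abs) (hb : IsLocalUnitary b) (hv : M.ord v ≤ matOrd b) :
    M.conj b (abs v) - abs (M.conj b v) ∈ C := by
  have hbs : IsSupportedIn b (matOrd b) := hb.1.isSupportedIn_matOrd
  have hfb : IsFin (fstar b) := (isLocalUnitary_fstar hb).1
  have hpos : M.conj b (abs v) ∈ C := h.cone.2.2 _ (h.abs_mem v) b hb.1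
  have hcomp : abs (M.rsmul (abs v) b) - abs (M.conj b v) ∈ C :=
    h.cone.sub_mem_of_smul_sub_mem (isLocalUnitary_fstar hb).fnorm_le_one (h.abs_mem _)
      (h.abs_smul_le _ _ hfb hb.1 v)
  have hright : M.conj b (abs v) - abs (M.rsmul (abs v) b) ∈ C := by
    have := h.abs_smul_le b (JMat (matOrd b)) hb.1 (isFin_JMat _) (M.conj b (abs v))
    rw [h.abs_of_mem _ hpos, M.rsmul_JMat_of_ord_le (M.ord_conj_le hbs), h.abs_of_mem _ hpos,
      M.lsmul_conj hb ((h.ord_abs_le v).trans hv)] at this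
    exact h.cone.sub_mem_of_smul_sub_mem hb.fnorm_le_one hpos this
  simpa only [sub_add_sub_cancel] using h.cone.2.1 _ hright _ hcomp

end IsAbsOrd

end FBimod

/-- In a non-degenerate absolutely ordered `𝔉`-bimodule,
`|𝔞*𝔳𝔞| = 𝔞*|𝔳|𝔞` for every local unitary `𝔞 ∈ 𝔉` with `o(𝔳) ≤ o(𝔞)`. -/
theorem statement2 {V : Type*} [AddCommGroup V] [Module ℂ V] (M : FBimod V) (C : Set V)
    (abs : V → V) (h : M.IsAbsOrd C abs) (v : V) (a : FMat)
    (ha : IsLocalUnitary a) (hord : M.ord v ≤ matOrd a) :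
    abs (M.conj a v) = M.conj a (abs v) := by
  have hw : M.ord (M.conj a v) ≤ matOrd a := M.ord_conj_le ha.1.isSupportedIn_matOrd
  have hle : M.conj a (abs v) - abs (M.conj a v) ∈ C := h.abs_conj_le ha hord
  have hge : abs (M.conj a v) - M.conj a (abs v) ∈ C := by
    have := h.abs_conj_le (isLocalUnitary_fstar ha) (v := M.conj a v) (by rwa [matOrd_fstar])
    rw [M.conj_fstar_conj ha hord] at this
    simpa only [M.conj_sub, M.conj_conj_fstar ha ((h.ord_abs_le _).trans hw)] using
      h.cone.2.2 _ this a ha.1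
  exact (sub_eq_zero.mp (h.eq_zero_of_mem_of_neg_mem hle (by rwa [neg_sub]))).symm
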